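/- arXiv:math/0503226 — 2 statements merged into one kernel-verified Lean document; each statement's English description precedes it below -/
import Mathlib

section
/- Let N₁ be the 6×6 integer matrix with rows (0,1,0,0,0,0), (1,0,1,1,0,0), (0,1,0,0,1,0), (0,1,0,1,1,0), (0,0,1,1,1,1), (0,0,0,0,1,1). Then the characteristic polynomial of N₁ has six distinct roots (N₁ has six distinct eigenvalues over ℂ). -/
open Polynomial

/-!
Expanding the determinant of `X - N₁` gives `X⁶ - 3X⁵ - 3X⁴ + 11X³ - 3X² - 3X + 1`. An explicit
Bézout identity `a f + b f' = 81` shows that `f` is coprime to its derivative in every field where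
`3 ≠ 0`, so over `ℂ` its six roots are simple.
-/

theorem Polynomial.Separable.card_roots_toFinset {k : Type*} [Field k] [IsAlgClosed k]
    [DecidableEq k] {p : k[X]} (hp : p.Separable) : p.roots.toFinset.card = p.natDegree := by
  rw [Multiset.toFinset_card_of_nodup (nodup_roots hp), IsAlgClosed.card_roots_eq_natDegree]

def fusionMatrix (R : Type*) [Ring R] : Matrix (Fin 6) (Fin 6) R :=
  !![0,1,0,0,0,0; 1,0,1,1,0,0; 0,1,0,0,1,0;
     0,1,0,1,1,0; 0,0,1,1,1,1; 0,0,0,0,1,1]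

noncomputable def fusionCharpoly (R : Type*) [Ring R] : R[X] :=
  X^6 - 3*X^5 - 3*X^4 + 11*X^3 - 3*X^2 - 3*X + 1

theorem charmatrix_fusionMatrix (R : Type*) [CommRing R] :
    (fusionMatrix R).charmatrix =
      !![X,-1,0,0,0,0; -1,X,-1,-1,0,0; 0,-1,X,0,-1,0;
         0,-1,0,X-1,-1,0; 0,0,-1,-1,X-1,-1; 0,0,0,0,-1,X-1] := by
  ext i j
  fin_cases i <;> fin_cases j <;> simp [fusionMatrix]

theorem charpoly_fusionMatrix (R : Type*) [CommRing R] :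
    (fusionMatrix R).charpoly = fusionCharpoly R := by
  rw [Matrix.charpoly, charmatrix_fusionMatrix, fusionCharpoly]
  simp [Matrix.det_succ_row_zero, Fin.sum_univ_succ, Fin.succAbove]
  ring

theorem natDegree_fusionCharpoly (R : Type*) [CommRing R] [Nontrivial R] :
    (fusionCharpoly R).natDegree = 6 := by
  unfold fusionCharpoly
  compute_degree!

theorem derivative_fusionCharpoly (R : Type*) [CommRing R] :
    derivative (fusionCharpoly R) = 6*X^5 - 15*X^4 - 12*X^3 + 33*X^2 - 6*X - 3 := by
  simp [fusionCharpoly, map_ofNat]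
  ring

theorem separable_fusionCharpoly {K : Type*} [Field K] (h3 : (3 : K) ≠ 0) :
    (fusionCharpoly K).Separable := by
  have h81 : (81 : K) ≠ 0 := by
    simpa [show (81 : K) = 3 ^ 4 by norm_num] using pow_ne_zero 4 h3
  -- cofactors from the extended Euclidean algorithm over `ℚ`, scaled to clear denominators
  refine ⟨C 81⁻¹ * (-249 - 1230*X + 918*X^2 + 624*X^3 - 312*X^4),
    C 81⁻¹ * (-110 + 59*X + 457*X^2 - 218*X^3 - 130*X^4 + 52*X^5), ?_⟩
  have bezout : (-249 - 1230*X + 918*X^2 + 624*X^3 - 312*X^4) * fusionCharpoly K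
      + (-110 + 59*X + 457*X^2 - 218*X^3 - 130*X^4 + 52*X^5)
        * derivative (fusionCharpoly K) = 81 := by
    rw [derivative_fusionCharpoly, fusionCharpoly]
    ring
  have hC : C 81⁻¹ * (81 : K[X]) = 1 := by
    rw [← map_ofNat C 81, ← C_mul, inv_mul_cancel₀ h81, C_1]
  linear_combination C 81⁻¹ * bezout + hC

/-- The fusion matrix `N₁` of the object labelled `(1,0)` in the
integer-weight subcategory of `C(so₅, 9, q)` has six distinct eigenvalues
over `ℂ`: its characteristic polynomial has 6 distinct roots. -/
theorem stmt_10 :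
    let N₁ : Matrix (Fin 6) (Fin 6) ℂ :=
      !![0,1,0,0,0,0; 1,0,1,1,0,0; 0,1,0,0,1,0;
         0,1,0,1,1,0; 0,0,1,1,1,1; 0,0,0,0,1,1]
    (Matrix.charpoly N₁).roots.toFinset.card = 6 := by
  change (fusionMatrix ℂ).charpoly.roots.toFinset.card = 6
  rw [charpoly_fusionMatrix, (separable_fusionCharpoly three_ne_zero).card_roots_toFinset,
    natDegree_fusionCharpoly]
end

section
/- Let α be a primitive 18th root of unity, r₁ = -α-α²+α⁵, r₂ = α+α²-α⁴, r₃ = α⁴-α⁵, and let S be the 6×6 matrix [[1,r₂,r₃,1,-1,r₁],[r₂,1,1,r₁,-r₃,1],[r₃,1,1,r₂,-r₁,1],[1,r₁,r₂,1,-1,r₃],[-1,-r₃,-r₁,-1,1,-r₂],[r₁,1,1,r₃,-r₂,1]]. Then det S ≠ 0. -/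
set_option maxHeartbeats 1000000

/-- For any primitive 18th root of unity `α`, the S-matrix of the
integer-weight modular subcategory of `C(so₅, 9, q)`, built from
`r₁ = -α-α²+α⁵`, `r₂ = α+α²-α⁴`, `r₃ = α⁴-α⁵`, has nonzero determinant. -/
theorem stmt_12 (α : ℂ) (hα : IsPrimitiveRoot α 18) :
    let r₁ : ℂ := -α - α ^ 2 + α ^ 5
    let r₂ : ℂ := α + α ^ 2 - α ^ 4
    let r₃ : ℂ := α ^ 4 - α ^ 5
    let S : Matrix (Fin 6) (Fin 6) ℂ :=
      !![1, r₂, r₃, 1, -1, r₁;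
         r₂, 1, 1, r₁, -r₃, 1;
         r₃, 1, 1, r₂, -r₁, 1;
         1, r₁, r₂, 1, -1, r₃;
         -1, -r₃, -r₁, -1, 1, -r₂;
         r₁, 1, 1, r₃, -r₂, 1]
    S.det ≠ 0 := by
  intro r₁ r₂ r₃ S
  have h18 : α ^ 18 = 1 := hα.pow_eq_one
  have h9ne : α ^ 9 ≠ 1 := hα.pow_ne_one_of_pos_of_lt (by norm_num) (by norm_num)
  have h6ne : α ^ 6 ≠ 1 := hα.pow_ne_one_of_pos_of_lt (by norm_num) (by norm_num)
  have h9 : α ^ 9 = -1 := by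
    have h : (α ^ 9 - 1) * (α ^ 9 + 1) = 0 := by linear_combination h18
    rcases mul_eq_zero.mp h with h | h
    · exact absurd (sub_eq_zero.mp h) h9ne
    · exact eq_neg_of_add_eq_zero_left h
  have h12 : α ^ 12 + α ^ 6 + 1 = 0 := by
    have h : (α ^ 6 - 1) * (α ^ 12 + α ^ 6 + 1) = 0 := by linear_combination h18
    rcases mul_eq_zero.mp h with h | h
    · exact absurd (sub_eq_zero.mp h) h6ne
    · exact h
  have key : α ^ 6 - α ^ 3 + 1 = 0 := by linear_combination h12 - α ^ 3 * h9
  have hSS : S * S = (9 : ℂ) • (1 : Matrix (Fin 6) (Fin 6) ℂ) := by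
    ext i j
    fin_cases i <;> fin_cases j <;>
      simp only [S, r₁, r₂, r₃, Matrix.mul_apply, Fin.sum_univ_succ, Fin.sum_univ_zero,
        Matrix.smul_apply, Matrix.one_apply, Fin.isValue, Matrix.cons_val', Matrix.cons_val_zero,
        Matrix.cons_val_one, Matrix.head_cons, Matrix.head_fin_const, Matrix.empty_val',
        Matrix.cons_val_fin_one, Matrix.of_apply, smul_eq_mul, Matrix.cons_val_succ,
        Matrix.head_val'] <;>
      norm_num [Fin.ext_iff] <;>
      first
        | ring1
        | linear_combination (α ^ 4 - α ^ 3 + α ^ 2 - 3) * key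
        | linear_combination (-α ^ 4 + α ^ 3 - α ^ 2 + 3) * key
        | linear_combination (2 * α ^ 4 - 2 * α ^ 3 + 2 * α ^ 2 - 6) * key
  intro h
  have hd : S.det * S.det = 9 ^ 6 := by
    rw [← Matrix.det_mul, hSS, Matrix.det_smul, Matrix.det_one]
    norm_num
  rw [h, mul_zero] at hd
  norm_num at hd
end
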